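/- Let n ≥ 3, let J_n ∈ M_n(ℂ) be the nilpotent Jordan block, and let B_n = E_{n−1,1} − E_{n,2} ∈ M_n(ℂ). Then the ℂ-linear span of all products of between 1 and 2n − 3 elements of {J_n, B_n} is a proper subspace of M_n(ℂ); in particular the identity matrix does not lie in this span. -/

import Mathlib

/-!
Grade `M_n(ℂ)` by giving the matrix unit `E_{ij}` degree `j - i`. Then `J_n` is homogeneous of
degree `1` and `B_n` of degree `2 - n`, so a word of length `L` containing `b` letters `B_n` is
homogeneous of degree `L - (n - 1) b`, and its trace vanishes unless `L = (n - 1) b`. For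
`1 ≤ L ≤ 2n - 3` this forces `b = 1`: the word is `J^p B J^q`, whose trace is `tr (J^(p+q) B)`.
That trace vanishes as well, because `J E_{n,2} = E_{n-1,1} J` makes the two terms of `B_n`
contribute equally. So the span consists of trace-zero matrices and misses the identity.
-/

/-- The `n × n` nilpotent Jordan block over `ℂ`. -/
def jordan (n : ℕ) : Matrix (Fin n) (Fin n) ℂ :=
  Matrix.of fun a b => if (a : ℕ) + 1 = (b : ℕ) then 1 else 0

/-- `L_k^0(S)`: the ℂ-linear span of all words in `S` of length between `1` and `k`. -/
noncomputable def wordSpan0 (n k : ℕ) (S : Set (Matrix (Fin n) (Fin n) ℂ)) :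
    Submodule ℂ (Matrix (Fin n) (Fin n) ℂ) :=
  Submodule.span ℂ {M | ∃ w : List (Matrix (Fin n) (Fin n) ℂ),
    1 ≤ w.length ∧ w.length ≤ k ∧ (∀ x ∈ w, x ∈ S) ∧ M = w.prod}

open Matrix

namespace Matrix

variable {ι R G : Type*} [AddCommGroup G]

/-- Homogeneity of degree `d` for the grading in which the matrix unit `E i j` has degree
`φ j - φ i`. -/
def IsHomogeneous [Zero R] (φ : ι → G) (M : Matrix ι ι R) (d : G) : Prop :=
  ∀ i j, M i j ≠ 0 → φ j - φ i = d

namespace IsHomogeneous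

variable {φ : ι → G} {M N : Matrix ι ι R} {d e : G}

theorem one [DecidableEq ι] [Zero R] [One R] (φ : ι → G) :
    IsHomogeneous φ (1 : Matrix ι ι R) 0 := by
  intro i j h
  obtain rfl : i = j := by by_contra hij; exact h (one_apply_ne hij)
  exact sub_self _

theorem single [DecidableEq ι] [Zero R] (φ : ι → G) (i j : ι) (c : R) :
    IsHomogeneous φ (single i j c) (φ j - φ i) := by
  intro i' j' h
  obtain ⟨rfl, rfl⟩ : i = i' ∧ j = j' := by
    by_contra hij
    exact h (single_apply_of_ne _ _ _ _ _ hij)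
  rfl

theorem sub [AddGroup R] (hM : IsHomogeneous φ M d) (hN : IsHomogeneous φ N d) :
    IsHomogeneous φ (M - N) d := by
  intro i j h
  by_cases hMij : M i j = 0
  · exact hN i j fun hNij => h (by simp [hMij, hNij])
  · exact hM i j hMij

theorem mul [Fintype ι] [NonUnitalNonAssocSemiring R] (hM : IsHomogeneous φ M d)
    (hN : IsHomogeneous φ N e) : IsHomogeneous φ (M * N) (d + e) := by
  intro i k h
  obtain ⟨j, -, hj⟩ := Finset.exists_ne_zero_of_sum_ne_zero h
  rw [← hM i j (left_ne_zero_of_mul hj), ← hN j k (right_ne_zero_of_mul hj)]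
  abel

theorem trace_eq_zero [Fintype ι] [AddCommMonoid R] (hM : IsHomogeneous φ M d) (hd : d ≠ 0) :
    trace M = 0 :=
  Finset.sum_eq_zero fun i _ => by_contra fun h => hd (by rw [← hM i i h, sub_self])

end IsHomogeneous

end Matrix

/-- The paper's `B_n = E_{n-1,1} - E_{n,2}`, in `0`-based indices. -/
def bMatrix (n : ℕ) (hn : 3 ≤ n) : Matrix (Fin n) (Fin n) ℂ :=
  single ⟨n - 2, Nat.sub_lt (Nat.zero_lt_of_lt hn) two_pos⟩ ⟨0, Nat.zero_lt_of_lt hn⟩ 1 -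
    single ⟨n - 1, Nat.sub_one_lt_of_lt hn⟩ ⟨1, Nat.lt_of_succ_lt hn⟩ 1

theorem jordan_isHomogeneous (n : ℕ) :
    IsHomogeneous (fun i : Fin n => (i : ℤ)) (jordan n) 1 := by
  intro i j h
  simp only [jordan, of_apply, ne_eq, ite_eq_right_iff, one_ne_zero, imp_false, not_not] at h
  change (j : ℤ) - i = 1
  omega

theorem jordan_mul_single_eq_single_mul_jordan {n : ℕ} (a b c d : Fin n) (x : ℂ)
    (hca : (c : ℕ) + 1 = a) (hdb : (d : ℕ) + 1 = b) :
    jordan n * single a b x = single c d x * jordan n := by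
  ext i j
  rw [mul_apply, mul_apply, Finset.sum_eq_single a, Finset.sum_eq_single d]
  · simp only [jordan, single_apply, of_apply, Fin.ext_iff, true_and, and_true]
    split_ifs <;> first | omega | simp
  · intro k _ hk
    simp [Ne.symm hk]
  · simp
  · intro k _ hk
    simp [Ne.symm hk]
  · simp

theorem trace_jordan_pow_succ_mul_single_sub_single {n : ℕ} (k : ℕ) (a b c d : Fin n)
    (x : ℂ) (hca : (c : ℕ) + 1 = a) (hdb : (d : ℕ) + 1 = b) :
    trace (jordan n ^ (k + 1) * (single c d x - single a b x)) = 0 := by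
  rw [Matrix.mul_sub, trace_sub, sub_eq_zero]
  conv_rhs =>
    rw [pow_succ, Matrix.mul_assoc, jordan_mul_single_eq_single_mul_jordan a b c d x hca hdb,
      ← Matrix.mul_assoc, trace_mul_cycle, ← pow_succ']

section

variable {n : ℕ} (hn : 3 ≤ n)

theorem bMatrix_isHomogeneous :
    IsHomogeneous (fun i : Fin n => (i : ℤ)) (bMatrix n hn) (2 - n) := by
  have h₁ := IsHomogeneous.single (fun i : Fin n => (i : ℤ))
    ⟨n - 2, by omega⟩ ⟨0, by omega⟩ (1 : ℂ)
  have h₂ := IsHomogeneous.single (fun i : Fin n => (i : ℤ))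
    ⟨n - 1, by omega⟩ ⟨1, by omega⟩ (1 : ℂ)
  rw [show (2 - n : ℤ) = 1 - ((n - 1 : ℕ) : ℤ) by omega]
  rw [show ((0 : ℕ) : ℤ) - ((n - 2 : ℕ) : ℤ) = 1 - ((n - 1 : ℕ) : ℤ) by omega] at h₁
  exact h₁.sub h₂

theorem jordan_ne_bMatrix : jordan n ≠ bMatrix n hn := by
  intro h
  have := congr_fun₂ h ⟨0, Nat.zero_lt_of_lt hn⟩ ⟨1, Nat.lt_of_succ_lt hn⟩
  simp [jordan, bMatrix, Fin.ext_iff, show n - 1 ≠ 0 by omega] at this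

theorem trace_jordan_pow_mul_bMatrix (k : ℕ) : trace (jordan n ^ k * bMatrix n hn) = 0 := by
  cases k with
  | zero =>
    rw [pow_zero, Matrix.one_mul]
    exact (bMatrix_isHomogeneous hn).trace_eq_zero (by omega)
  | succ k =>
    exact trace_jordan_pow_succ_mul_single_sub_single k _ _ _ _ 1 (by simp only; omega) rfl

open Classical in
theorem isHomogeneous_list_prod (w : List (Matrix (Fin n) (Fin n) ℂ))
    (hw : ∀ x ∈ w, x ∈ ({jordan n, bMatrix n hn} : Set _)) :
    IsHomogeneous (fun i : Fin n => (i : ℤ)) w.prod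
      (w.length - (n - 1) * w.count (bMatrix n hn)) := by
  induction w with
  | nil => simpa using IsHomogeneous.one _
  | cons x w ih =>
    have hw' := ih fun y hy => hw y (List.mem_cons_of_mem x hy)
    rw [List.prod_cons]
    rcases hw x List.mem_cons_self with rfl | rfl
    · refine (congrArg (IsHomogeneous _ _) ?_).mp ((jordan_isHomogeneous n).mul hw')
      simp [jordan_ne_bMatrix hn]
      ring
    · refine (congrArg (IsHomogeneous _ _) ?_).mp ((bMatrix_isHomogeneous hn).mul hw')
      simp
      ring

theorem trace_list_prod_eq_zero (w : List (Matrix (Fin n) (Fin n) ℂ))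
    (hw : ∀ x ∈ w, x ∈ ({jordan n, bMatrix n hn} : Set _))
    (h₁ : 1 ≤ w.length) (h₂ : w.length ≤ 2 * n - 3) : trace w.prod = 0 := by
  classical
  by_cases hdeg : (w.length : ℤ) - (n - 1) * w.count (bMatrix n hn) = 0
  · -- the length is `n - 1` times the number of `B`s
    have hc : w.count (bMatrix n hn) = 1 := by
      have hL : (w.length : ℤ) ≤ 2 * n - 3 := by omega
      generalize w.count (bMatrix n hn) = c at hdeg
      rcases c with _ | _ | c
      · push_cast at hdeg
        omega
      · rfl
      · push_cast at hdeg
        nlinarith [mul_nonneg (show (0 : ℤ) ≤ n - 1 by omega) c.cast_nonneg]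
    obtain ⟨s, t, rfl⟩ := List.mem_iff_append.1 (List.count_pos_iff.1 (hc ▸ one_pos))
    have hst : s.count (bMatrix n hn) = 0 ∧ t.count (bMatrix n hn) = 0 := by
      simp only [List.count_append, List.count_cons_self] at hc
      omega
    have hs : ∀ x ∈ s, x = jordan n := fun x hx =>
      (hw x (by simp [hx])).resolve_right fun h => List.count_eq_zero.1 hst.1 (h ▸ hx)
    have ht : ∀ x ∈ t, x = jordan n := fun x hx =>
      (hw x (by simp [hx])).resolve_right fun h => List.count_eq_zero.1 hst.2 (h ▸ hx)
    rw [List.prod_append, List.prod_cons, List.prod_eq_pow_card s _ hs,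
      List.prod_eq_pow_card t _ ht, trace_mul_cycle', ← Matrix.mul_assoc, ← pow_add]
    exact trace_jordan_pow_mul_bMatrix hn _
  · exact (isHomogeneous_list_prod hn w hw).trace_eq_zero hdeg

end

theorem wordSpan0_le_ker_trace {n : ℕ} (hn : 3 ≤ n) :
    wordSpan0 n (2 * n - 3) {jordan n, bMatrix n hn} ≤
      LinearMap.ker (traceLinearMap (Fin n) ℂ ℂ) :=
  Submodule.span_le.2 fun _ ⟨w, h₁, h₂, hw, hM⟩ =>
    hM ▸ trace_list_prod_eq_zero hn w hw h₁ h₂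

/-- For `n ≥ 3` and `B_n = E_{n-1,1} - E_{n,2}`: the span of words in `{J_n, B_n}` of
length between `1` and `2n - 3` is a proper subspace of `M_n(ℂ)`; in particular it does
not contain the identity matrix. -/
theorem stmt_9 (n : ℕ) (hn : 3 ≤ n) :
    let B : Matrix (Fin n) (Fin n) ℂ :=
      Matrix.single ⟨n - 2, by omega⟩ ⟨0, by omega⟩ (1 : ℂ) -
        Matrix.single ⟨n - 1, by omega⟩ ⟨1, by omega⟩ (1 : ℂ)
    wordSpan0 n (2 * n - 3) {jordan n, B} ≠ ⊤ ∧
      (1 : Matrix (Fin n) (Fin n) ℂ) ∉ wordSpan0 n (2 * n - 3) {jordan n, B} := by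
  intro B
  have hone : (1 : Matrix (Fin n) (Fin n) ℂ) ∉ wordSpan0 n (2 * n - 3) {jordan n, B} := by
    intro h
    have htrace := wordSpan0_le_ker_trace hn h
    simp only [LinearMap.mem_ker, traceLinearMap_apply, trace_one, Fintype.card_fin,
      Nat.cast_eq_zero] at htrace
    omega
  exact ⟨fun htop => hone (htop ▸ Submodule.mem_top), hone⟩
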